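/- Let (μ_n)_{n∈ℕ} be probability measures on a compact metric space X, and (f_n : X → X) continuous maps with (f_n)_* μ_n = μ_{n+1}. Suppose for bounded φ and ψ in a class D with seminorm ‖·‖_D one has |⟨μ_0, (f_{n-1}∘⋯∘f_0)^*φ · ψ⟩ − ⟨μ_n, φ⟩⟨μ_0, ψ⟩| ≤ C d^{-n}(1+e^{εn})²‖φ‖_∞‖ψ‖_D with 2ε < log d. If μ_{α(n)} → μ_0 weakly along a subsequence α, then for continuous φ and ψ ∈ D: ⟨μ_0, (f_{α(n)-1}∘⋯∘f_0)^*φ · ψ⟩ → ⟨μ_0, φ⟩⟨μ_0, ψ⟩. -/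
import Mathlib


open MeasureTheory Filter

/-- Composition `f_{n-1} ∘ ⋯ ∘ f_0` of a sequence of maps. -/
def compChain {X : Type*} (f : ℕ → X → X) : ℕ → X → X
  | 0 => id
  | n + 1 => f n ∘ compChain f n

/-- Recurrence corollary: given the mixing estimate with `2ε < log d` and weak convergence
`μ (α n) → μ 0` along a strictly increasing subsequence `α`, for continuous `φ` and `ψ ∈ D`
one has `⟨μ 0, (f_{α n - 1} ∘ ⋯ ∘ f_0)^* φ · ψ⟩ → ⟨μ 0, φ⟩ ⟨μ 0, ψ⟩`. -/
theorem recurrence_corollary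
    {X : Type*} [MetricSpace X] [CompactSpace X] [MeasurableSpace X] [BorelSpace X]
    (μ : ℕ → Measure X) (hprob : ∀ n, IsProbabilityMeasure (μ n))
    (f : ℕ → X → X) (hf : ∀ n, Continuous (f n))
    (hinv : ∀ n, (μ n).map (f n) = μ (n + 1))
    (D : Set (X → ℝ)) (N : (X → ℝ) → ℝ)
    (C d ε : ℝ) (hd : 1 < d) (hε : 0 < ε) (hε' : 2 * ε < Real.log d)
    (hmix : ∀ (φ ψ : X → ℝ) (Mφ : ℝ), (∀ x, |φ x| ≤ Mφ) → ψ ∈ D → ∀ n : ℕ,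
      |(∫ x, φ (compChain f n x) * ψ x ∂(μ 0)) - (∫ x, φ x ∂(μ n)) * ∫ x, ψ x ∂(μ 0)| ≤
        C * d ^ (-(n : ℝ)) * (1 + Real.exp (ε * n)) ^ 2 * Mφ * N ψ)
    (α : ℕ → ℕ) (hα : StrictMono α)
    (hweak : ∀ g : X → ℝ, Continuous g →
      Tendsto (fun n => ∫ x, g x ∂(μ (α n))) atTop (nhds (∫ x, g x ∂(μ 0)))) :
    ∀ (φ ψ : X → ℝ), Continuous φ → ψ ∈ D →
      Tendsto (fun n => ∫ x, φ (compChain f (α n) x) * ψ x ∂(μ 0)) atTop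
        (nhds ((∫ x, φ x ∂(μ 0)) * ∫ x, ψ x ∂(μ 0))) := by
  intro φ ψ hφ hψ
  haveI := hprob 0
  -- X is nonempty since μ 0 is a probability measure
  have hX : Nonempty X := by
    by_contra h
    rw [not_nonempty_iff] at h
    have h1 : (μ 0) Set.univ = 1 := measure_univ
    simp [Set.univ_eq_empty_iff.mpr h] at h1
  -- φ is bounded
  obtain ⟨x₀, -, hx₀⟩ := IsCompact.exists_isMaxOn isCompact_univ Set.univ_nonempty
    (hφ.abs.continuousOn (s := Set.univ))
  set Mφ : ℝ := |φ x₀| with hMφ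
  have hbd : ∀ x, |φ x| ≤ Mφ := fun x => hx₀ (Set.mem_univ x)
  -- the geometric bound tends to 0
  have key : Tendsto (fun n : ℕ => C * d ^ (-(n : ℝ)) * (1 + Real.exp (ε * n)) ^ 2 * Mφ * N ψ)
      atTop (nhds 0) := by
    have hd0 : (0:ℝ) < d := lt_trans one_pos hd
    have hcore : Tendsto (fun n : ℕ => d ^ (-(n : ℝ)) * (1 + Real.exp (ε * n)) ^ 2)
        atTop (nhds 0) := by
      have hpow : Tendsto (fun n : ℕ => 4 * Real.exp (2 * ε - Real.log d) ^ n)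
          atTop (nhds 0) := by
        have h1 : Real.exp (2 * ε - Real.log d) < 1 := by
          rw [Real.exp_lt_one_iff]; linarith
        have := tendsto_pow_atTop_nhds_zero_of_lt_one (le_of_lt (Real.exp_pos _)) h1
        simpa using this.const_mul 4
      refine squeeze_zero (fun n => ?_) (fun n => ?_) hpow
      · positivity
      · have he1 : (1:ℝ) ≤ Real.exp (ε * n) := by
          rw [Real.one_le_exp_iff]; positivity
        have hsq : (1 + Real.exp (ε * n)) ^ 2 ≤ 4 * Real.exp (ε * n) ^ 2 := by nlinarith
        have hdn : d ^ (-(n : ℝ)) = Real.exp (-(n : ℝ) * Real.log d) := by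
          rw [Real.rpow_def_of_pos hd0, mul_comm]
        calc d ^ (-(n : ℝ)) * (1 + Real.exp (ε * n)) ^ 2
            ≤ Real.exp (-(n : ℝ) * Real.log d) * (4 * Real.exp (ε * n) ^ 2) := by
              rw [hdn]
              exact mul_le_mul_of_nonneg_left hsq (le_of_lt (Real.exp_pos _))
          _ = 4 * Real.exp (2 * ε - Real.log d) ^ n := by
              rw [sq, ← Real.exp_add, ← Real.exp_nat_mul, mul_left_comm, ← Real.exp_add]
              congr 2
              push_cast
              ring
    have := ((hcore.const_mul C).mul_const Mφ).mul_const (N ψ)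
    simpa [mul_assoc, mul_comm, mul_left_comm] using this
  -- composition with α (which tends to atTop)
  have hαtop : Tendsto α atTop atTop := hα.tendsto_atTop
  have key' : Tendsto (fun n : ℕ =>
      C * d ^ (-(α n : ℝ)) * (1 + Real.exp (ε * α n)) ^ 2 * Mφ * N ψ) atTop (nhds 0) :=
    key.comp hαtop
  -- error term tends to 0
  have herr : Tendsto (fun n : ℕ =>
      (∫ x, φ (compChain f (α n) x) * ψ x ∂(μ 0)) -
        (∫ x, φ x ∂(μ (α n))) * ∫ x, ψ x ∂(μ 0)) atTop (nhds 0) := by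
    refine squeeze_zero_norm (fun n => ?_) key'
    simpa using hmix φ ψ Mφ hbd hψ (α n)
  -- main term converges by weak convergence
  have hmain : Tendsto (fun n : ℕ => (∫ x, φ x ∂(μ (α n))) * ∫ x, ψ x ∂(μ 0))
      atTop (nhds ((∫ x, φ x ∂(μ 0)) * ∫ x, ψ x ∂(μ 0))) :=
    (hweak φ hφ).mul_const _
  have := herr.add hmain
  simpa using this
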